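/- Let \varepsilon_1, \varepsilon_2, \varepsilon_3, \varepsilon_4 \in \mathbb{Z}_2^\times and let Q(x) = \sum_{i=1}^4 \varepsilon_i x_i^2 over \mathbb{Z}_2. Then: (i) Q is \mathbb{Z}_2-universal; (ii) Q is primitively \mathbb{Z}_2-universal if and only if both 4 and 8 are represented by Q on primitive vectors (i.e., 4 = Q(x) and 8 = Q(y) for some x, y \in \mathbb{Z}_2^4 each having at least one unit coordinate). -/

import Mathlib

/-!
By Hensel's lemma a `2`-adic integer congruent to `1` modulo `8` is a square, so a representation
of `α` modulo `8` by a vector with a unit coordinate `aⱼ` lifts to an exact primitive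
representation: rescale `aⱼ` by a square root of `1 + (α - Q(a))/(εⱼaⱼ²)`. Modulo `8`, the form
`∑ εᵢxᵢ²` with odd coefficients primitively represents every residue other than `0` and `4` (a
finite check), which settles the nonzero elements that are not divisible by `4` and, after
scaling by squares, universality. The residues `0` and `4` are primitively represented exactly
when `8` and `4` are.
-/

open PadicInt

theorem ZMod.exists_primitive_sum_mul_sq_eq (e : Fin 4 → ZMod 8) (he : ∀ i, IsUnit (e i))
    {r : ZMod 8} (h0 : r ≠ 0) (h4 : r ≠ 4) :
    ∃ a : Fin 4 → ℕ, (∃ i, a i = 1) ∧ ∑ i, e i * (a i : ZMod 8) ^ 2 = r := by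
  set_option synthInstance.maxSize 2000 in
  have key : ∀ e₀ e₁ e₂ e₃ : ZMod 8, IsUnit e₀ → IsUnit e₁ → IsUnit e₂ → IsUnit e₃ →
      ∀ r : ZMod 8, r ≠ 0 → r ≠ 4 →
      ∃ a₀ a₁ a₂ a₃ : Fin 3, (a₀ = 1 ∨ a₁ = 1 ∨ a₂ = 1 ∨ a₃ = 1) ∧
        e₀ * (a₀.val : ZMod 8) ^ 2 + e₁ * (a₁.val : ZMod 8) ^ 2 + e₂ * (a₂.val : ZMod 8) ^ 2
          + e₃ * (a₃.val : ZMod 8) ^ 2 = r := by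
    decide
  obtain ⟨a₀, a₁, a₂, a₃, hone, hsum⟩ := key _ _ _ _ (he 0) (he 1) (he 2) (he 3) r h0 h4
  refine ⟨![a₀.val, a₁.val, a₂.val, a₃.val], ?_, by simpa [Fin.sum_univ_four] using hsum⟩
  rcases hone with rfl | rfl | rfl | rfl
  exacts [⟨0, rfl⟩, ⟨1, rfl⟩, ⟨2, rfl⟩, ⟨3, rfl⟩]

namespace PadicInt

theorem isUnit_of_dvd_sub_one {p : ℕ} [Fact p.Prime] {c : ℤ_[p]} (h : (p : ℤ_[p]) ∣ c - 1) :
    IsUnit c := by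
  have hnon : 1 - c ∈ nonunits ℤ_[p] := by
    rw [mem_nonunits, norm_lt_one_iff_dvd, ← neg_sub]
    exact h.neg_right
  simpa using IsLocalRing.isUnit_one_sub_self_of_mem_nonunits _ hnon

theorem norm_eight : ‖(8 : ℤ_[2])‖ = 8⁻¹ := by
  have h := norm_p_pow (p := 2) 3
  norm_num at h
  rw [h]; norm_num

theorem isSquare_of_eight_dvd_sub_one {c : ℤ_[2]} (h : (8 : ℤ_[2]) ∣ c - 1) : IsSquare c := by
  open Polynomial in
  obtain ⟨z, hz, -⟩ := hensels_lemma (p := 2) (F := X ^ 2 - C c) (a := 1) <| by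
    obtain ⟨t, ht⟩ := h
    have h1c : ‖(1 : ℤ_[2]) - c‖ ≤ 8⁻¹ := by
      rw [← norm_neg, neg_sub, ht, norm_mul, norm_eight]
      exact mul_le_of_le_one_right (by norm_num) (norm_le_one t)
    have h2 : ‖(2 : ℤ_[2])‖ = 2⁻¹ := by simpa using norm_p (p := 2)
    simp only [map_sub, map_pow, aeval_X, aeval_C, derivative_X_pow, derivative_C, map_mul,
      map_natCast, one_pow, sub_zero, Algebra.algebraMap_self, RingHom.id_apply]
    norm_num [h2]
    linarith
  exact ⟨z, by simpa [sub_eq_zero, sq, eq_comm] using hz⟩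

noncomputable def toZModEight : ℤ_[2] →+* ZMod 8 := toZModPow 3

theorem eight_dvd_sub_iff {x y : ℤ_[2]} :
    (8 : ℤ_[2]) ∣ x - y ↔ toZModEight x = toZModEight y := by
  rw [toZModEight, ← RingHom.sub_mem_ker_iff, ker_toZModPow, Ideal.mem_span_singleton]
  norm_num

theorem exists_primitive_sum_mul_sq_eq_of_eight_dvd {ι : Type*} [Fintype ι] [DecidableEq ι]
    {ε a : ι → ℤ_[2]} {α : ℤ_[2]} (hε : ∀ i, IsUnit (ε i)) (ha : ∃ j, IsUnit (a j))
    (h : (8 : ℤ_[2]) ∣ α - ∑ i, ε i * a i ^ 2) :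
    ∃ x : ι → ℤ_[2], (∃ j, IsUnit (x j)) ∧ ∑ i, ε i * x i ^ 2 = α := by
  obtain ⟨j, haj⟩ := ha
  obtain ⟨t, ht⟩ := h
  obtain ⟨u, hu⟩ := (hε j).mul (haj.pow 2)
  obtain ⟨z, hz⟩ := isSquare_of_eight_dvd_sub_one (c := 1 + 8 * t * ↑u⁻¹) (by simp)
  have hzu : IsUnit z := by
    refine isUnit_of_mul_isUnit_left (y := z) (hz ▸ isUnit_of_dvd_sub_one ?_)
    exact Dvd.intro (4 * t * ↑u⁻¹) (by ring)
  refine ⟨Function.update a j (a j * z), ⟨j, by simpa using haj.mul hzu⟩, ?_⟩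
  have hdiff : ∑ i, ε i * Function.update a j (a j * z) i ^ 2 - ∑ i, ε i * a i ^ 2 = 8 * t := by
    rw [← Finset.sum_sub_distrib, Fintype.sum_eq_single j fun i hi => by simp [hi]]
    calc ε j * Function.update a j (a j * z) j ^ 2 - ε j * a j ^ 2
        = ↑u * (z * z - 1) := by rw [Function.update_self, hu]; ring
      _ = 8 * t := by
        rw [← hz, add_sub_cancel_left, mul_comm, Units.inv_mul_cancel_right]
  linear_combination hdiff - ht

theorem exists_primitive_sum_mul_sq_eq {ε : Fin 4 → ℤ_[2]} (hε : ∀ i, IsUnit (ε i)) {α : ℤ_[2]}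
    (h0 : toZModEight α ≠ 0) (h4 : toZModEight α ≠ 4) :
    ∃ x : Fin 4 → ℤ_[2], (∃ i, IsUnit (x i)) ∧ ∑ i, ε i * x i ^ 2 = α := by
  obtain ⟨a, ⟨j, hj⟩, ha⟩ :=
    ZMod.exists_primitive_sum_mul_sq_eq _ (fun i => (hε i).map toZModEight) h0 h4
  refine exists_primitive_sum_mul_sq_eq_of_eight_dvd (a := fun i => (a i : ℤ_[2])) hε
    ⟨j, by simp [hj]⟩ (eight_dvd_sub_iff.2 ?_)
  simp [ha]

theorem exists_eq_sq_mul_of_ne_zero {α : ℤ_[2]} (hα : α ≠ 0) :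
    ∃ c β : ℤ_[2], α = c ^ 2 * β ∧ toZModEight β ≠ 0 ∧ toZModEight β ≠ 4 := by
  have hu := (unitCoeff hα).isUnit.map toZModEight
  have key : ∀ e : ZMod 8, IsUnit e → ∀ k < 2, 2 ^ k * e ≠ 0 ∧ 2 ^ k * e ≠ 4 := by decide
  refine ⟨2 ^ (α.valuation / 2), 2 ^ (α.valuation % 2) * unitCoeff hα, ?_, ?_⟩
  · rw [← pow_mul, ← mul_assoc, ← pow_add, Nat.div_add_mod', mul_comm]
    exact_mod_cast unitCoeff_spec hα
  · simpa [map_ofNat] using key _ hu _ (Nat.mod_lt _ two_pos)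

end PadicInt

/-- Proposition 5.6: for units `ε₁, …, ε₄` of `ℤ_[2]` and `Q = ∑ εᵢxᵢ²`:
(i) `Q` is `ℤ_[2]`-universal; (ii) `Q` is primitively `ℤ_[2]`-universal iff both
`4` and `8` are primitively represented by `Q`. -/
theorem stmt_17 (ε : Fin 4 → ℤ_[2]) (hε : ∀ i, IsUnit (ε i)) :
    (∀ α : ℤ_[2], ∃ x : Fin 4 → ℤ_[2], ∑ i : Fin 4, ε i * x i ^ 2 = α) ∧
    ((∀ α : ℤ_[2], α ≠ 0 → ∃ x : Fin 4 → ℤ_[2],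
        (∃ i, IsUnit (x i)) ∧ ∑ i : Fin 4, ε i * x i ^ 2 = α) ↔
      ((∃ x : Fin 4 → ℤ_[2],
          (∃ i, IsUnit (x i)) ∧ ∑ i : Fin 4, ε i * x i ^ 2 = 4) ∧
       (∃ y : Fin 4 → ℤ_[2],
          (∃ i, IsUnit (y i)) ∧ ∑ i : Fin 4, ε i * y i ^ 2 = 8))) := by
  refine ⟨fun α => ?_, ⟨fun H => ⟨H 4 (by norm_num), H 8 (by norm_num)⟩, ?_⟩⟩
  · rcases eq_or_ne α 0 with rfl | hα
    · exact ⟨0, by simp⟩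
    obtain ⟨c, β, rfl, h0, h4⟩ := exists_eq_sq_mul_of_ne_zero hα
    obtain ⟨x, -, hx⟩ := exists_primitive_sum_mul_sq_eq hε h0 h4
    refine ⟨fun i => c * x i, ?_⟩
    rw [← hx, Finset.mul_sum]
    exact Finset.sum_congr rfl fun i _ => by ring
  · rintro ⟨⟨x, hx, hx4⟩, ⟨y, hy, hy8⟩⟩ α -
    by_cases h0 : toZModEight α = 0
    · refine exists_primitive_sum_mul_sq_eq_of_eight_dvd hε hy (eight_dvd_sub_iff.2 ?_)
      rw [hy8, h0, map_ofNat]; decide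
    by_cases h4 : toZModEight α = 4
    · refine exists_primitive_sum_mul_sq_eq_of_eight_dvd hε hx (eight_dvd_sub_iff.2 ?_)
      rw [hx4, h4, map_ofNat]
    exact exists_primitive_sum_mul_sq_eq hε h0 h4
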